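/- Let C_a ⊆ ℝ^m be a compact set, let K ⊆ C_a × ℝ^n be a compact set, let l : ℝ^m × ℝ^n → ℝ be continuous, and let M > 0. Define φ : ℝ^m → ℝ by φ(a) = −M if the fiber K_a = {x ∈ ℝ^n : (a,x) ∈ K} is empty, and φ(a) = max(−M, sup_{x ∈ K_a} l(a,x)) otherwise. Then there exists a sequence of polynomials (p_j)_{j ∈ ℕ} in ℝ[a₁,…,a_m] that are feasible, i.e. for every j: l(a,x) ≤ p_j(a) for all (a,x) ∈ K with a ∈ C_a, and −M ≤ p_j(a) for all a ∈ C_a, and whose objective values converge to the optimum: lim_{j → ∞} ∫_{C_a} p_j(a) dμ(a) = ∫_{C_a} φ(a) dμ(a), where μ is the Lebesgue measure restricted to C_a. -/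

import Mathlib

open MeasureTheory Filter

/-!
The clamped fiberwise supremum `φ` is upper semicontinuous: the part of the compact set `K`
where `l ≥ t` projects onto a compact, hence closed, set. An upper semicontinuous function
bounded above is the pointwise limit of its Lipschitz envelopes
`g k a = ⨆ b, φ b - k * dist a b`, which are continuous and lie above `φ` (Baire). By
Stone–Weierstrass there are polynomials squeezed between `g k` and `g k + 1 / (k + 1)` on the
compact set `C_a`; they are feasible, uniformly bounded on `C_a` and converge pointwise to `φ`
there, so dominated convergence gives the convergence of the objective values.
-/

open Set Topology NNReal

section LipschitzEnvelope

variable {X : Type*} [PseudoMetricSpace X]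

noncomputable def lipschitzEnvelope (f : X → ℝ) (k : ℝ≥0) (a : X) : ℝ :=
  ⨆ b, f b - k * dist a b

variable {f : X → ℝ} {B : ℝ}

lemma bddAbove_range_sub_mul_dist (hf : ∀ b, f b ≤ B) (k : ℝ≥0) (a : X) :
    BddAbove (range fun b => f b - k * dist a b) := by
  refine ⟨B, ?_⟩
  rintro _ ⟨b, rfl⟩
  have : 0 ≤ (k : ℝ) * dist a b := by positivity
  linarith [hf b]

lemma le_lipschitzEnvelope (hf : ∀ b, f b ≤ B) (k : ℝ≥0) (a : X) :
    f a ≤ lipschitzEnvelope f k a :=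
  le_ciSup_of_le (bddAbove_range_sub_mul_dist hf k a) a (by simp)

lemma lipschitzEnvelope_le (hf : ∀ b, f b ≤ B) (k : ℝ≥0) (a : X) :
    lipschitzEnvelope f k a ≤ B :=
  have : Nonempty X := ⟨a⟩
  ciSup_le fun b => by
    have : 0 ≤ (k : ℝ) * dist a b := by positivity
    linarith [hf b]

lemma lipschitzWith_lipschitzEnvelope (hf : ∀ b, f b ≤ B) (k : ℝ≥0) :
    LipschitzWith k (lipschitzEnvelope f k) := by
  refine LipschitzWith.of_le_add_mul k fun a a' => ?_
  have : Nonempty X := ⟨a⟩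
  refine ciSup_le fun b => ?_
  have hb : f b - k * dist a' b ≤ lipschitzEnvelope f k a' :=
    le_ciSup (bddAbove_range_sub_mul_dist hf k a') b
  have htri : (k : ℝ) * dist a' b ≤ k * dist a a' + k * dist a b := by
    rw [← mul_add, dist_comm a a']
    exact mul_le_mul_of_nonneg_left (dist_triangle _ _ _) k.2
  linarith

lemma tendsto_lipschitzEnvelope (hf : ∀ b, f b ≤ B) {a : X} (hfa : UpperSemicontinuousAt f a) :
    Tendsto (fun k : ℕ => lipschitzEnvelope f k a) atTop (𝓝 (f a)) := by
  refine tendsto_order.2 ⟨fun c hc => Eventually.of_forall fun k =>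
    hc.trans_le (le_lipschitzEnvelope hf k a), fun c hc => ?_⟩
  obtain ⟨c', hfc', hc'c⟩ := exists_between hc
  obtain ⟨δ, hδ, hnear⟩ := Metric.eventually_nhds_iff.1 (hfa c' hfc')
  obtain ⟨N, hN⟩ := exists_nat_ge ((B - c') / δ)
  -- Within `δ` of `a` we have `f < c'`; farther away the penalty `k * δ ≥ B - c'` takes over.
  refine eventually_atTop.2 ⟨N, fun k hk => lt_of_le_of_lt ?_ hc'c⟩
  have : Nonempty X := ⟨a⟩
  refine ciSup_le fun b => ?_
  have hk_nonneg : (0 : ℝ) ≤ k := k.cast_nonneg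
  rcases lt_or_ge (dist b a) δ with hba | hba
  · have : 0 ≤ (k : ℝ) * dist a b := by positivity
    simp only [NNReal.coe_natCast]
    linarith [hnear hba]
  · have hBk : B - c' ≤ k * δ := by
      rw [div_le_iff₀ hδ] at hN
      nlinarith [(Nat.cast_le (α := ℝ)).2 hk]
    have : (k : ℝ) * δ ≤ k * dist a b := by
      rw [dist_comm]; exact mul_le_mul_of_nonneg_left hba hk_nonneg
    simp only [NNReal.coe_natCast]
    linarith [hf b]

end LipschitzEnvelope

section ClampedFiberSup

variable {X Y : Type*}

/-- The paper's `φ`: inserting `c` into the set handles the empty fiber, where `sSup ∅ = 0`. -/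
noncomputable def clampedFiberSup (K : Set (X × Y)) (l : X × Y → ℝ) (c : ℝ) (a : X) : ℝ :=
  sSup (insert c ((fun x => l (a, x)) '' {x | (a, x) ∈ K}))

variable {K : Set (X × Y)} {l : X × Y → ℝ} {c : ℝ}

lemma clampedFiberSup_of_eq_empty {a : X} (h : {x | (a, x) ∈ K} = ∅) :
    clampedFiberSup K l c a = c := by
  simp [clampedFiberSup, h]

lemma clampedFiberSup_le {B : ℝ} (hc : c ≤ B) (hl : ∀ q ∈ K, l q ≤ B) (a : X) :
    clampedFiberSup K l c a ≤ B :=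
  csSup_le (insert_nonempty _ _) <| forall_mem_insert.2
    ⟨hc, forall_mem_image.2 fun _ hx => hl _ hx⟩

variable [TopologicalSpace X] [TopologicalSpace Y]

lemma bddAbove_insert_image_fiber (hK : IsCompact K) (hl : Continuous l) (c : ℝ) (a : X) :
    BddAbove (insert c ((fun x => l (a, x)) '' {x | (a, x) ∈ K})) :=
  ((hK.image hl).bddAbove.mono (by rintro _ ⟨x, hx, rfl⟩; exact ⟨_, hx, rfl⟩)).insert c

lemma clampedFiberSup_of_nonempty (hK : IsCompact K) (hl : Continuous l) {a : X}
    (h : {x | (a, x) ∈ K}.Nonempty) :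
    clampedFiberSup K l c a = max c (sSup ((fun x => l (a, x)) '' {x | (a, x) ∈ K})) :=
  csSup_insert ((bddAbove_insert_image_fiber hK hl c a).mono (subset_insert _ _)) (h.image _)

lemma le_clampedFiberSup (hK : IsCompact K) (hl : Continuous l) (a : X) :
    c ≤ clampedFiberSup K l c a :=
  le_csSup (bddAbove_insert_image_fiber hK hl c a) (mem_insert _ _)

lemma apply_le_clampedFiberSup (hK : IsCompact K) (hl : Continuous l) {q : X × Y} (hq : q ∈ K) :
    l q ≤ clampedFiberSup K l c q.1 :=
  le_csSup (bddAbove_insert_image_fiber hK hl c q.1) (mem_insert_of_mem _ ⟨q.2, hq, rfl⟩)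

lemma upperSemicontinuous_clampedFiberSup [T2Space X] (hK : IsCompact K) (hl : Continuous l)
    (c : ℝ) : UpperSemicontinuous (clampedFiberSup K l c) := by
  intro a t ht
  obtain ⟨t', hat', ht't⟩ := exists_between ht
  have hproj : IsClosed (Prod.fst '' (K ∩ l ⁻¹' Ici t')) :=
    ((hK.inter_right (isClosed_Ici.preimage hl)).image continuous_fst).isClosed
  have ha : a ∉ Prod.fst '' (K ∩ l ⁻¹' Ici t') := by
    rintro ⟨q, ⟨hqK, hqt⟩, rfl⟩
    exact (apply_le_clampedFiberSup hK hl hqK).not_gt (hat'.trans_le hqt)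
  filter_upwards [hproj.isOpen_compl.mem_nhds ha] with b hb
  refine lt_of_le_of_lt (csSup_le (insert_nonempty _ _) (forall_mem_insert.2 ⟨?_, ?_⟩)) ht't
  · exact ((le_clampedFiberSup hK hl a).trans_lt hat').le
  · refine forall_mem_image.2 fun x hx => not_lt.1 fun hxt => hb ?_
    exact ⟨(b, x), ⟨hx, le_of_lt hxt⟩, rfl⟩

end ClampedFiberSup

section PolynomialApproximation

variable {σ : Type*} {s : Set (σ → ℝ)}

lemma exists_mvPolynomial_near (hs : IsCompact s) {g : (σ → ℝ) → ℝ} (hg : Continuous g)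
    {ε : ℝ} (hε : 0 < ε) :
    ∃ p : MvPolynomial σ ℝ, ∀ a ∈ s, |MvPolynomial.eval a p - g a| < ε := by
  set Φ := MvPolynomial.aeval (R := ℝ) fun i => (ContinuousMap.eval i : C(σ → ℝ, ℝ))
  have hΦ : ∀ p a, Φ p a = MvPolynomial.eval a p := fun p a => by
    induction p using MvPolynomial.induction_on <;> simp_all [Φ]
  have hsep : Φ.range.SeparatesPoints := by
    intro a b hab
    obtain ⟨i, hi⟩ := Function.ne_iff.1 hab
    exact ⟨_, ⟨_, ⟨MvPolynomial.X i, rfl⟩, rfl⟩, by simpa [Φ] using hi⟩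
  obtain ⟨_, ⟨p, rfl⟩, hp⟩ :=
    ContinuousMap.exists_mem_subalgebra_near_continuous_of_isCompact_of_separatesPoints
      hsep ⟨g, hg⟩ hs hε
  exact ⟨p, fun a ha => by simpa [hΦ] using hp a ha⟩

lemma exists_mvPolynomial_between (hs : IsCompact s) {g : (σ → ℝ) → ℝ} (hg : Continuous g)
    {ε : ℝ} (hε : 0 < ε) :
    ∃ p : MvPolynomial σ ℝ, ∀ a ∈ s, g a ≤ MvPolynomial.eval a p ∧
      MvPolynomial.eval a p ≤ g a + ε := by
  obtain ⟨p, hp⟩ := exists_mvPolynomial_near hs hg (half_pos hε)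
  refine ⟨p + MvPolynomial.C (ε / 2), fun a ha => ?_⟩
  have := abs_lt.1 (hp a ha)
  simp only [map_add, MvPolynomial.eval_C]
  constructor <;> linarith

lemma UpperSemicontinuous.exists_mvPolynomial_tendsto [Fintype σ] (hs : IsCompact s)
    {f : (σ → ℝ) → ℝ} (hf : UpperSemicontinuous f) {B : ℝ} (hB : ∀ a, f a ≤ B) :
    ∃ p : ℕ → MvPolynomial σ ℝ,
      (∀ k, ∀ a ∈ s,
        f a ≤ MvPolynomial.eval a (p k) ∧ MvPolynomial.eval a (p k) ≤ B + 1) ∧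
      ∀ a ∈ s, Tendsto (fun k => MvPolynomial.eval a (p k)) atTop (𝓝 (f a)) := by
  choose p hp using fun k : ℕ => exists_mvPolynomial_between hs
    (lipschitzWith_lipschitzEnvelope hB k).continuous (Nat.one_div_pos_of_nat (n := k))
  refine ⟨p, fun k a ha => ⟨(le_lipschitzEnvelope hB k a).trans (hp k a ha).1, ?_⟩,
    fun a ha => ?_⟩
  · have : 1 / ((k : ℝ) + 1) ≤ 1 :=
      div_le_one_of_le₀ (by linarith [k.cast_nonneg (α := ℝ)]) (by positivity)
    linarith [(hp k a ha).2, lipschitzEnvelope_le hB k a]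
  · have hg := tendsto_lipschitzEnvelope hB (hf a)
    have hgε := hg.add tendsto_one_div_add_atTop_nhds_zero_nat
    rw [add_zero] at hgε
    exact tendsto_of_tendsto_of_tendsto_of_le_of_le hg hgε (fun k => (hp k a ha).1)
      fun k => (hp k a ha).2

end PolynomialApproximation

theorem feasible_polynomials_objective_converges_general {m n : ℕ}
    (Ca : Set (Fin m → ℝ)) (hCa : IsCompact Ca)
    (K : Set ((Fin m → ℝ) × (Fin n → ℝ))) (hK : IsCompact K)
    (l : (Fin m → ℝ) × (Fin n → ℝ) → ℝ) (hl : Continuous l)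
    (M : ℝ)
    (φ : (Fin m → ℝ) → ℝ)
    (hφ_empty : ∀ a : Fin m → ℝ, {x : Fin n → ℝ | (a, x) ∈ K} = ∅ → φ a = -M)
    (hφ_ne : ∀ a : Fin m → ℝ, {x : Fin n → ℝ | (a, x) ∈ K} ≠ ∅ →
      φ a = max (-M) (sSup ((fun x => l (a, x)) '' {x : Fin n → ℝ | (a, x) ∈ K}))) :
    ∃ p : ℕ → MvPolynomial (Fin m) ℝ,
      (∀ j : ℕ, ∀ q ∈ K, q.1 ∈ Ca → l q ≤ MvPolynomial.eval q.1 (p j)) ∧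
      (∀ j : ℕ, ∀ a ∈ Ca, -M ≤ MvPolynomial.eval a (p j)) ∧
      Tendsto (fun j : ℕ => ∫ a, MvPolynomial.eval a (p j) ∂(volume.restrict Ca))
        atTop (nhds (∫ a, φ a ∂(volume.restrict Ca))) := by
  obtain rfl : φ = clampedFiberSup K l (-M) := funext fun a => by
    rcases eq_empty_or_nonempty {x | (a, x) ∈ K} with h | h
    · rw [hφ_empty a h, clampedFiberSup_of_eq_empty h]
    · rw [hφ_ne a h.ne_empty, clampedFiberSup_of_nonempty hK hl h]
  obtain ⟨C, hC⟩ := (hK.image hl).bddAbove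
  have hφ_le : ∀ a, clampedFiberSup K l (-M) a ≤ max (-M) C :=
    clampedFiberSup_le (le_max_left _ _) fun q hq => (hC ⟨q, hq, rfl⟩).trans (le_max_right _ _)
  obtain ⟨p, hp_bounds, hp_lim⟩ :=
    (upperSemicontinuous_clampedFiberSup hK hl (-M)).exists_mvPolynomial_tendsto hCa hφ_le
  have hp_ge : ∀ j, ∀ a ∈ Ca, -M ≤ MvPolynomial.eval a (p j) := fun j a ha =>
    (le_clampedFiberSup hK hl a).trans (hp_bounds j a ha).1
  refine ⟨p, fun j q hq hq1 => (apply_le_clampedFiberSup hK hl hq).trans (hp_bounds j _ hq1).1,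
    hp_ge, ?_⟩
  have : IsFiniteMeasure (volume.restrict Ca) := isFiniteMeasure_restrict.2 hCa.measure_lt_top.ne
  have hCa_meas : MeasurableSet Ca := hCa.isClosed.measurableSet
  refine tendsto_integral_of_dominated_convergence (fun _ => max M (max (-M) C + 1))
    (fun j => (MvPolynomial.continuous_eval _).aestronglyMeasurable) (integrable_const _)
    (fun j => (ae_restrict_iff' hCa_meas).2 (Eventually.of_forall fun a ha => ?_))
    ((ae_restrict_iff' hCa_meas).2 (Eventually.of_forall hp_lim))
  rw [Real.norm_eq_abs, abs_le]
  exact ⟨by linarith [hp_ge j a ha, le_max_left M (max (-M) C + 1)],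
    (hp_bounds j a ha).2.trans (le_max_right _ _)⟩

/-- Optimality: There is a sequence of feasible polynomial solutions
(dominating `l` on `K` and `-M` on `C_a`) whose objective values converge to
`∫_{C_a} φ dμ`, where `φ` is the clamped fiberwise supremum function. -/
theorem feasible_polynomials_objective_converges {m n : ℕ}
    (Ca : Set (Fin m → ℝ)) (hCa : IsCompact Ca)
    (K : Set ((Fin m → ℝ) × (Fin n → ℝ))) (hK : IsCompact K)
    (hKCa : ∀ q ∈ K, q.1 ∈ Ca)
    (l : (Fin m → ℝ) × (Fin n → ℝ) → ℝ) (hl : Continuous l)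
    (M : ℝ) (hM : 0 < M)
    (φ : (Fin m → ℝ) → ℝ)
    (hφ_empty : ∀ a : Fin m → ℝ, {x : Fin n → ℝ | (a, x) ∈ K} = ∅ → φ a = -M)
    (hφ_ne : ∀ a : Fin m → ℝ, {x : Fin n → ℝ | (a, x) ∈ K} ≠ ∅ →
      φ a = max (-M) (sSup ((fun x => l (a, x)) '' {x : Fin n → ℝ | (a, x) ∈ K}))) :
    ∃ p : ℕ → MvPolynomial (Fin m) ℝ,
      (∀ j : ℕ, ∀ q ∈ K, q.1 ∈ Ca → l q ≤ MvPolynomial.eval q.1 (p j)) ∧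
      (∀ j : ℕ, ∀ a ∈ Ca, -M ≤ MvPolynomial.eval a (p j)) ∧
      Tendsto (fun j : ℕ => ∫ a, MvPolynomial.eval a (p j) ∂(volume.restrict Ca))
        atTop (nhds (∫ a, φ a ∂(volume.restrict Ca))) :=
  feasible_polynomials_objective_converges_general Ca hCa K hK l hl M φ hφ_empty hφ_ne
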